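/- Let x = ∑_{i=1}^n ω^{α_i}·a_i and y = ∑_{j=1}^m ω^{β_j}·b_j be nonzero ordinals in Cantor normal form. Then the left division x / y is given by: (1) if α_1 < β_1 then x / y = 0. Otherwise let k be the greatest index i with α_i ≥ β_1, and let q = ⌊a_k / b_1⌋ be the natural-number quotient; then: (2) if α_k ≠ β_1 then x / y = ∑_{i=1}^k ω^{α_i ∸ β_1}·a_i; (3) if α_k = β_1 and ∑_{i=k}^n ω^{α_i}·a_i ≥ ω^{α_k}·(b_1·q) + ∑_{j=2}^m ω^{β_j}·b_j, then x / y = ∑_{i=1}^{k-1} ω^{α_i ∸ β_1}·a_i + q; (4) otherwise (α_k = β_1 and the inequality in (3) fails), x / y = ∑_{i=1}^{k-1} ω^{α_i ∸ β_1}·a_i + (q − 1). -/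

import Mathlib

/-!
Write `y = ω ^ β₀ * b₀ + r` with `r < ω ^ β₀`. As `ω ^ β₀ ≤ y < ω ^ (β₀ + 1)`, we have
`y * ω ^ δ = ω ^ (β₀ + δ)` for every `δ > 0`, so multiplying by `y` turns the expression with
exponents `α i - β₀` into the part of `x` whose exponents exceed `β₀`; hence `x / y` is that
expression plus `T / y`, where `T` is the remaining tail of `x`. Either `T < ω ^ β₀ ≤ y`, or
`T = ω ^ β₀ * a_k + s` with `s < ω ^ β₀`. In the latter case `y * t = ω ^ β₀ * (b₀ * t) + r` for
`t ≥ 1`, because `r` is absorbed by the following `ω ^ β₀ * b₀`, and comparing leading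
coefficients pins `T / y` down to `q` or `q - 1`.
-/

open Ordinal

/-- The value of a Cantor normal form expression `∑_{i<n} ω^(α i) · (a i)`,
with the summands added in order of increasing index. -/
noncomputable def CNFsum (n : ℕ) (α : ℕ → Ordinal) (a : ℕ → ℕ) : Ordinal :=
  ((List.range n).map fun i => ω ^ α i * (a i : Ordinal)).sum

section CNFsum

variable (α : ℕ → Ordinal) (a : ℕ → ℕ)

theorem CNFsum_succ (n : ℕ) : CNFsum (n + 1) α a = CNFsum n α a + ω ^ α n * a n := by
  simp [CNFsum, List.range_succ]

theorem CNFsum_succ' (n : ℕ) :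
    CNFsum (n + 1) α a = ω ^ α 0 * a 0 + CNFsum n (fun i => α (i + 1)) (fun i => a (i + 1)) := by
  simp [CNFsum, List.range_succ_eq_map, Function.comp_def]

theorem CNFsum_add (s t : ℕ) :
    CNFsum (s + t) α a = CNFsum s α a + CNFsum t (fun i => α (s + i)) (fun i => a (s + i)) := by
  simp [CNFsum, List.range_add, Function.comp_def]

variable {α a}

theorem CNFsum_lt_opow {n : ℕ} {γ : Ordinal} (h : ∀ i < n, α i < γ) : CNFsum n α a < ω ^ γ := by
  induction n with
  | zero => simpa [CNFsum] using opow_pos γ omega0_pos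
  | succ n ih =>
    rw [CNFsum_succ]
    exact isPrincipal_add_omega0_opow γ (ih fun i hi => h i (by omega))
      (opow_mul_lt_opow (natCast_lt_omega0 _) (h n (by omega)))

theorem mul_CNFsum_sub {y e : Ordinal} (hy : ∀ δ, 0 < δ → y * ω ^ δ = ω ^ (e + δ)) {n : ℕ}
    (h : ∀ i < n, e < α i) : y * CNFsum n (fun i => α i - e) a = CNFsum n α a := by
  induction n with
  | zero => simp [CNFsum]
  | succ n ih =>
    have hn : e < α n := h n (by omega)
    rw [CNFsum_succ, CNFsum_succ, mul_add, ih fun i hi => h i (by omega), ← mul_assoc,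
      hy _ (Ordinal.lt_sub.2 (by simpa using hn)), Ordinal.add_sub_cancel_of_le hn.le]

theorem CNFsum_div_eq_add_div {y e : Ordinal} (hy : ∀ δ, 0 < δ → y * ω ^ δ = ω ^ (e + δ))
    {n j : ℕ} (hj : j ≤ n) (h : ∀ i < j, e < α i) :
    CNFsum n α a / y = CNFsum j (fun i => α i - e) a +
      CNFsum (n - j) (fun i => α (j + i)) (fun i => a (j + i)) / y := by
  have hy₀ : y ≠ 0 := by
    rintro rfl
    simpa using hy 1 one_pos
  have hsplit := CNFsum_add α a j (n - j)
  rw [Nat.add_sub_cancel' hj] at hsplit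
  rw [hsplit, ← mul_CNFsum_sub hy h, mul_add_div _ hy₀]

end CNFsum

theorem mul_opow_eq_opow_add {y e δ : Ordinal} (h₁ : ω ^ e ≤ y) (h₂ : y < ω ^ (e + 1))
    (hδ : 0 < δ) : y * ω ^ δ = ω ^ (e + δ) := by
  obtain ⟨N, hN⟩ := lt_omega0_opow_succ.1 (by rwa [Order.succ_eq_add_one])
  have hN₀ : (0 : Ordinal) < N := by
    rcases Nat.eq_zero_or_pos N with rfl | hN₀
    · simp at hN
    · exact_mod_cast hN₀
  have hωδ : ω ∣ ω ^ δ := by simpa using opow_dvd_opow ω (Order.one_le_iff_pos.2 hδ)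
  refine le_antisymm ?_ ?_
  · calc y * ω ^ δ ≤ ω ^ e * N * ω ^ δ := by gcongr
      _ = ω ^ (e + δ) := by
        rw [mul_assoc, mul_omega0_dvd hN₀ (natCast_lt_omega0 N) hωδ, opow_add]
  · rw [opow_add]
    gcongr

theorem add_mul_natCast_add_one {c r : Ordinal} (h : r + c = c) (t : ℕ) :
    (c + r) * (t + 1) = c * (t + 1) + r := by
  induction t with
  | zero => simp
  | succ t ih =>
    rw [Nat.cast_succ, mul_add_one, ih, add_assoc, ← add_assoc r, h, ← add_assoc, ← mul_add_one]

section LeadingTerm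

variable {e r s : Ordinal} {B c t : ℕ}

theorem opow_le_opow_mul_add (hB : 0 < B) : ω ^ e ≤ ω ^ e * B + r :=
  (le_mul_left _ (by exact_mod_cast hB)).trans le_self_add

theorem opow_mul_add_mul_natCast (hr : r < ω ^ e) (hB : 0 < B) (ht : 0 < t) :
    (ω ^ e * B + r) * t = ω ^ e * (B * t : ℕ) + r := by
  obtain ⟨t, rfl⟩ := Nat.exists_eq_add_of_lt ht
  have hlead : ω ^ e ≤ ω ^ e * B := le_mul_left _ (by exact_mod_cast hB)
  push_cast
  rw [zero_add, add_mul_natCast_add_one (add_of_omega0_opow_le hr hlead), mul_assoc]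

theorem opow_mul_add_mul_natCast_le (hr : r < ω ^ e) (hB : 0 < B) (h : B * t < c) :
    (ω ^ e * B + r) * t ≤ ω ^ e * c + s := by
  rcases Nat.eq_zero_or_pos t with rfl | ht
  · simp
  rw [opow_mul_add_mul_natCast hr hB ht]
  exact (opow_mul_add_lt_opow_mul hr (by exact_mod_cast h)).le.trans le_self_add

theorem lt_opow_mul_add_mul_natCast (hr : r < ω ^ e) (hs : s < ω ^ e) (h : c < B * t) :
    ω ^ e * c + s < (ω ^ e * B + r) * t := by
  have hBt : 0 < B * t := by omega
  rw [opow_mul_add_mul_natCast hr (Nat.pos_of_mul_pos_right hBt) (Nat.pos_of_mul_pos_left hBt)]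
  exact (opow_mul_add_lt_opow_mul hs (by exact_mod_cast h)).trans_le le_self_add

theorem opow_mul_add_div_of_le (hr : r < ω ^ e) (hs : s < ω ^ e) (hB : 0 < B)
    (H : ω ^ e * ((B * (c / B) : ℕ) : Ordinal) + r ≤ ω ^ e * c + s) :
    (ω ^ e * c + s) / (ω ^ e * B + r) = (c / B : ℕ) := by
  refine div_eq ?_ ?_
  · rcases Nat.eq_zero_or_pos (c / B) with hq | hq
    · simp [hq]
    · rwa [opow_mul_add_mul_natCast hr hB hq]
  · rw [← Nat.cast_add_one]
    exact lt_opow_mul_add_mul_natCast hr hs (Nat.lt_mul_div_succ c hB)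

theorem opow_mul_add_div_of_not_le (hr : r < ω ^ e) (hB : 0 < B) (hc : 0 < c)
    (H : ¬ω ^ e * ((B * (c / B) : ℕ) : Ordinal) + r ≤ ω ^ e * c + s) :
    (ω ^ e * c + s) / (ω ^ e * B + r) = (c / B - 1 : ℕ) := by
  have hq : 0 < c / B := by
    refine Nat.pos_of_ne_zero fun hq => H ?_
    rw [hq, mul_zero, Nat.cast_zero, mul_zero, zero_add]
    exact hr.le.trans (opow_le_opow_mul_add hc)
  refine div_eq (opow_mul_add_mul_natCast_le hr hB ?_) ?_
  · have := Nat.mul_div_le c B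
    rw [Nat.mul_sub_one]
    omega
  · rw [← Nat.cast_add_one, Nat.sub_add_cancel hq, opow_mul_add_mul_natCast hr hB hq]
    exact lt_of_not_ge H

end LeadingTerm

theorem cnf_div_general (n m : ℕ) (hm : 1 ≤ m)
    (α β : ℕ → Ordinal) (a b : ℕ → ℕ)
    (hα : ∀ i j, i < j → j < n → α j < α i)
    (hβ : ∀ i j, i < j → j < m → β j < β i)
    (ha : ∀ i, i < n → 0 < a i) (hb : ∀ j, j < m → 0 < b j) :
    -- (1)
    (α 0 < β 0 → CNFsum n α a / CNFsum m β b = 0) ∧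
    -- otherwise, `k` is the greatest index `i` with `α i ≥ β 0`
    (∀ k, k < n → β 0 ≤ α k → (∀ i, k < i → i < n → α i < β 0) →
      -- (2)
      ((α k ≠ β 0 →
        CNFsum n α a / CNFsum m β b = CNFsum (k + 1) (fun i => α i - β 0) a) ∧
      -- (3)
      (α k = β 0 →
        ω ^ α k * ((b 0 * (a k / b 0) : ℕ) : Ordinal) +
            CNFsum (m - 1) (fun j => β (j + 1)) (fun j => b (j + 1)) ≤
          CNFsum (n - k) (fun i => α (k + i)) (fun i => a (k + i)) →
        CNFsum n α a / CNFsum m β b =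
          CNFsum k (fun i => α i - β 0) a + ((a k / b 0 : ℕ) : Ordinal)) ∧
      -- (4)
      (α k = β 0 →
        ¬(ω ^ α k * ((b 0 * (a k / b 0) : ℕ) : Ordinal) +
            CNFsum (m - 1) (fun j => β (j + 1)) (fun j => b (j + 1)) ≤
          CNFsum (n - k) (fun i => α (k + i)) (fun i => a (k + i))) →
        CNFsum n α a / CNFsum m β b =
          CNFsum k (fun i => α i - β 0) a + ((a k / b 0 - 1 : ℕ) : Ordinal)))) := by
  obtain ⟨m, rfl⟩ : ∃ m', m = m' + 1 := ⟨m - 1, by omega⟩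
  simp only [Nat.add_sub_cancel]
  set r := CNFsum m (fun j => β (j + 1)) (fun j => b (j + 1))
  have hy : CNFsum (m + 1) β b = ω ^ β 0 * b 0 + r := CNFsum_succ' β b m
  have hr : r < ω ^ β 0 := CNFsum_lt_opow fun j hj => hβ 0 (j + 1) (by omega) (by omega)
  have hb₀ : 0 < b 0 := hb 0 (by omega)
  have hy_ge : ω ^ β 0 ≤ CNFsum (m + 1) β b := hy ▸ opow_le_opow_mul_add hb₀
  have hy_lt : CNFsum (m + 1) β b < ω ^ (β 0 + 1) :=
    hy ▸ opow_mul_add_lt_opow (natCast_lt_omega0 _) hr (lt_add_one _)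
  have hyδ : ∀ δ, 0 < δ → CNFsum (m + 1) β b * ω ^ δ = ω ^ (β 0 + δ) :=
    fun _ => mul_opow_eq_opow_add hy_ge hy_lt
  refine ⟨fun h => div_eq_zero_of_lt ((CNFsum_lt_opow fun i hin => ?_).trans_le hy_ge),
    fun k hk hαk htail => ?_⟩
  · rcases i.eq_zero_or_pos with rfl | hi
    exacts [h, (hα 0 i hi hin).trans h]
  set s := CNFsum (n - k - 1) (fun i => α (k + (i + 1))) (fun i => a (k + (i + 1)))
  have hs : s < ω ^ β 0 :=
    CNFsum_lt_opow fun i hi => htail (k + (i + 1)) (by omega) (by omega)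
  have hk_split : CNFsum (n - k) (fun i => α (k + i)) (fun i => a (k + i)) =
      ω ^ α k * a k + s := by
    rw [show n - k = n - k - 1 + 1 by omega, CNFsum_succ']
    rfl
  have hhead : ∀ i < k, β 0 < α i := fun i hi => hαk.trans_lt (hα i k hi hk)
  refine ⟨fun hne => ?_, fun heq H => ?_, fun heq H => ?_⟩
  · have hk' : ∀ i < k + 1, β 0 < α i := fun i hi =>
      (Nat.lt_succ_iff_lt_or_eq.1 hi).elim (hhead i) fun h => h ▸ hαk.lt_of_ne' hne
    have hrest : CNFsum (n - (k + 1)) (fun i => α (k + 1 + i)) (fun i => a (k + 1 + i)) <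
        ω ^ β 0 := CNFsum_lt_opow fun i hi => htail (k + 1 + i) (by omega) (by omega)
    rw [CNFsum_div_eq_add_div hyδ hk hk', div_eq_zero_of_lt (hrest.trans_le hy_ge), add_zero]
  · rw [hk_split, heq] at H
    rw [CNFsum_div_eq_add_div hyδ hk.le hhead, hk_split, heq, hy,
      opow_mul_add_div_of_le hr hs hb₀ H]
  · rw [hk_split, heq] at H
    rw [CNFsum_div_eq_add_div hyδ hk.le hhead, hk_split, heq, hy,
      opow_mul_add_div_of_not_le hr hb₀ (ha k hk) H]

/-- Left division of two nonzero ordinals given in Cantor normal form. If `α 0 < β 0` the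
quotient is `0`; otherwise, with `k` the greatest index whose exponent is `≥ β 0` and
`q = ⌊a k / b 0⌋`, the quotient is computed by the three remaining cases. -/
theorem cnf_div (n m : ℕ) (hn : 1 ≤ n) (hm : 1 ≤ m)
    (α β : ℕ → Ordinal) (a b : ℕ → ℕ)
    (hα : ∀ i j, i < j → j < n → α j < α i)
    (hβ : ∀ i j, i < j → j < m → β j < β i)
    (ha : ∀ i, i < n → 0 < a i) (hb : ∀ j, j < m → 0 < b j) :
    -- (1)
    (α 0 < β 0 → CNFsum n α a / CNFsum m β b = 0) ∧
    -- otherwise, `k` is the greatest index `i` with `α i ≥ β 0`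
    (∀ k, k < n → β 0 ≤ α k → (∀ i, k < i → i < n → α i < β 0) →
      -- (2)
      ((α k ≠ β 0 →
        CNFsum n α a / CNFsum m β b = CNFsum (k + 1) (fun i => α i - β 0) a) ∧
      -- (3)
      (α k = β 0 →
        ω ^ α k * ((b 0 * (a k / b 0) : ℕ) : Ordinal) +
            CNFsum (m - 1) (fun j => β (j + 1)) (fun j => b (j + 1)) ≤
          CNFsum (n - k) (fun i => α (k + i)) (fun i => a (k + i)) →
        CNFsum n α a / CNFsum m β b =
          CNFsum k (fun i => α i - β 0) a + ((a k / b 0 : ℕ) : Ordinal)) ∧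
      -- (4)
      (α k = β 0 →
        ¬(ω ^ α k * ((b 0 * (a k / b 0) : ℕ) : Ordinal) +
            CNFsum (m - 1) (fun j => β (j + 1)) (fun j => b (j + 1)) ≤
          CNFsum (n - k) (fun i => α (k + i)) (fun i => a (k + i))) →
        CNFsum n α a / CNFsum m β b =
          CNFsum k (fun i => α i - β 0) a + ((a k / b 0 - 1 : ℕ) : Ordinal)))) :=
  cnf_div_general n m hm α β a b hα hβ ha hb
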